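/- Automatic a.s. sequential continuity: Let G be a nonempty, 𝒯_{ε,λ}-closed, L⁰-convex subset of L⁰(𝓕,ℝ^d) and T : G → L⁰(𝓕,ℝ^d) a σ-stable map that is continuous in probability. Then T is a.s. sequentially continuous: for every x ∈ G and every sequence (x_n) in G with |x_n⁰(ω) − x⁰(ω)| → 0 for a.e. ω, one has |(T(x_n))⁰(ω) − (T(x))⁰(ω)| → 0 for a.e. ω. -/

import Mathlib

/-!
Fix `ε > 0`. On the set where `T (xs k)` is frequently `ε`-far from `T x`, choose measurably a
random subsequence `n k` of such far indices. The random-index terms `xs_{n k}` lie in `G`,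
because a `𝒯_{ε,λ}`-closed L⁰-convex set is σ-stable (a countable concatenation is the a.s. limit
of finite ones, which are iterated L⁰-convex combinations); they still converge to `x` a.s., hence
in probability, and σ-stability of `T` gives `T (xs_{n k}) = (T xs)_{n k}`. Continuity in
probability yields a subsequence along which `T (xs_{n k}) → T x` a.s., which is impossible on
that set unless it is null.
-/

open MeasureTheory Filter Set Topology

noncomputable section

namespace RandomBrouwer

variable {Ω : Type*} [MeasurableSpace Ω]

/-- `ℝ^d` with the Euclidean norm. -/
abbrev Ed (d : ℕ) : Type := EuclideanSpace ℝ (Fin d)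

/-- `L⁰(𝓕,ℝ^d)`: equivalence classes (mod a.e. equality) of measurable functions `Ω → ℝ^d`. -/
abbrev L0 (μ : Measure Ω) (d : ℕ) : Type _ := Ω →ₘ[μ] Ed d

/-- A countable measurable partition of `Ω`. -/
def IsPartition (A : ℕ → Set Ω) : Prop :=
  (∀ n, MeasurableSet (A n)) ∧ (Pairwise fun m n => Disjoint (A m) (A n)) ∧ (⋃ n, A n) = univ

/-- A finite measurable partition of `Ω`. -/
def IsFinPartition {m : ℕ} (A : Fin m → Set Ω) : Prop :=
  (∀ i, MeasurableSet (A i)) ∧ (Pairwise fun i j => Disjoint (A i) (A j)) ∧ (⋃ i, A i) = univ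

variable (μ : Measure Ω) (d : ℕ)

/-- `z = ∑ₙ 1_{A n} (v n)`: `z` is the countable concatenation of the sequence `v`
along the countable measurable partition `A`. -/
def IsConcat {β : Type*} [TopologicalSpace β] (A : ℕ → Set Ω) (v : ℕ → Ω →ₘ[μ] β)
    (z : Ω →ₘ[μ] β) : Prop :=
  ∀ n, ∀ᵐ ω ∂μ, ω ∈ A n → z ω = v n ω

/-- `z = ∑ᵢ 1_{A i} (v i)` for a finite partition. -/
def IsFinConcat {β : Type*} [TopologicalSpace β] {m : ℕ} (A : Fin m → Set Ω)
    (v : Fin m → Ω →ₘ[μ] β) (z : Ω →ₘ[μ] β) : Prop :=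
  ∀ i, ∀ᵐ ω ∂μ, ω ∈ A i → z ω = v i ω

/-- A σ-stable subset of `L⁰(𝓕,ℝ^d)`. -/
def SigmaStable (G : Set (L0 μ d)) : Prop :=
  ∀ A : ℕ → Set Ω, IsPartition A → ∀ v : ℕ → L0 μ d, (∀ n, v n ∈ G) →
    ∀ z : L0 μ d, IsConcat μ A v z → z ∈ G

/-- A σ-stable map on `G` (with values classes of `β`-valued functions). -/
def SigmaStableMapOn {β : Type*} [TopologicalSpace β] (G : Set (L0 μ d))
    (f : L0 μ d → (Ω →ₘ[μ] β)) : Prop :=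
  ∀ A : ℕ → Set Ω, IsPartition A → ∀ v : ℕ → L0 μ d, (∀ n, v n ∈ G) →
    ∀ z ∈ G, IsConcat μ A v z → IsConcat μ A (fun n => f (v n)) (f z)

/-- A local map on `G`. -/
def LocalOn (G : Set (L0 μ d)) (h : L0 μ d → L0 μ d) : Prop :=
  ∀ x ∈ G, ∀ y ∈ G, ∀ A : Set Ω, MeasurableSet A →
    (∀ᵐ ω ∂μ, ω ∈ A → x ω = y ω) → ∀ᵐ ω ∂μ, ω ∈ A → h x ω = h y ω

/-- `G` is L⁰-convex. -/
def L0Convex (G : Set (L0 μ d)) : Prop :=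
  ∀ x ∈ G, ∀ y ∈ G, ∀ lam : Ω → ℝ, Measurable lam → (∀ ω, lam ω ∈ Icc (0:ℝ) 1) →
    ∀ z : L0 μ d, (∀ᵐ ω ∂μ, z ω = lam ω • x ω + (1 - lam ω) • y ω) → z ∈ G

/-- `G` is a.s. bounded. -/
def ASBounded (G : Set (L0 μ d)) : Prop :=
  ∃ r : Ω → ℝ, Measurable r ∧ (∀ ω, 0 ≤ r ω) ∧ ∀ x ∈ G, ∀ᵐ ω ∂μ, ‖x ω‖ ≤ r ω

/-- `G` is `𝒯_{ε,λ}`-closed, i.e. sequentially closed under convergence in probability. -/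
def TelClosed (G : Set (L0 μ d)) : Prop :=
  ∀ x : ℕ → L0 μ d, (∀ n, x n ∈ G) → ∀ z : L0 μ d,
    TendstoInMeasure μ (fun n => ⇑(x n)) atTop ⇑z → z ∈ G

/-- `f` is continuous in probability (`𝒯_{ε,λ}`-continuous) on `G`. -/
def ContInProbOn (G : Set (L0 μ d)) (f : L0 μ d → L0 μ d) : Prop :=
  ∀ x : ℕ → L0 μ d, (∀ n, x n ∈ G) → ∀ z ∈ G,
    TendstoInMeasure μ (fun n => ⇑(x n)) atTop ⇑z →
    TendstoInMeasure μ (fun n => ⇑(f (x n))) atTop ⇑(f z)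

/-- `y` is a random subsequence of `v`. -/
def IsRandomSubseq (v : ℕ → L0 μ d) (y : ℕ → L0 μ d) : Prop :=
  ∃ nk : ℕ → Ω → ℕ, (∀ k, Measurable (nk k)) ∧ (∀ k ω, nk k ω < nk (k + 1) ω) ∧
    ∀ k, ∀ᵐ ω ∂μ, y k ω = v (nk k ω) ω

/-- `f` is random sequentially continuous on the σ-stable set `G`. -/
def RandSeqContOn (G : Set (L0 μ d)) (f : L0 μ d → L0 μ d) : Prop :=
  ∀ v : ℕ → L0 μ d, (∀ k, v k ∈ G) → ∀ z ∈ G,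
    TendstoInMeasure μ (fun k => ⇑(v k)) atTop ⇑z →
    ∃ y : ℕ → L0 μ d, (∀ k, y k ∈ G) ∧ IsRandomSubseq μ d v y ∧
      TendstoInMeasure μ (fun k => ⇑(f (y k))) atTop ⇑(f z)

/-- The locally L⁰-convex topology `𝒯_c` on `L⁰(𝓕,ℝ^d)`, generated by random open balls. -/
def Tc : TopologicalSpace (L0 μ d) :=
  .generateFrom {B | ∃ (x : L0 μ d) (r : Ω → ℝ), Measurable r ∧ (∀ᵐ ω ∂μ, 0 < r ω) ∧
    B = {y : L0 μ d | ∀ᵐ ω ∂μ, ‖x ω - y ω‖ < r ω}}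

/-- The L⁰-convex hull `Conv_{L⁰}{x i : i}` of finitely many elements of `L⁰(𝓕,ℝ^d)`. -/
def ConvL0 {ι : Type*} [Fintype ι] (x : ι → L0 μ d) : Set (L0 μ d) :=
  {z | ∃ lam : ι → Ω → ℝ, (∀ i, Measurable (lam i)) ∧ (∀ i ω, lam i ω ∈ Icc (0:ℝ) 1) ∧
    (∀ ω, ∑ i, lam i ω = 1) ∧ ∀ᵐ ω ∂μ, z ω = ∑ i, lam i ω • x i ω}

/-- `x 0, …, x (n-1)` are L⁰-affinely independent. -/
def L0AffineIndep {n : ℕ} [NeZero n] (x : Fin n → L0 μ d) : Prop :=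
  ∀ ξ : Fin n → Ω → ℝ, (∀ i, Measurable (ξ i)) →
    (∀ᵐ ω ∂μ, ∑ i ∈ Finset.univ.erase (0 : Fin n), ξ i ω • (x i ω - x 0 ω) = 0) →
    ∀ i, i ≠ (0 : Fin n) → ∀ᵐ ω ∂μ, ξ i ω = 0

/-- The σ-stable hull of a set `H`. -/
def sigmaHull (H : Set (L0 μ d)) : Set (L0 μ d) :=
  {z | ∃ (A : ℕ → Set Ω) (v : ℕ → L0 μ d), IsPartition A ∧ (∀ k, v k ∈ H) ∧ IsConcat μ A v z}

/-- An L⁰-simplicial subdivision of the L⁰-simplex with vertices `x 0, …, x (n-1)`,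
together with its counterpart simplicial subdivision. -/
structure L0Subdivision {n : ℕ} [NeZero n] (x : Fin n → L0 μ d) where
  I : ℕ
  hI : 0 < I
  T : Fin I → Fin n → L0 μ d
  indepL0 : ∀ i, L0AffineIndep μ d (T i)
  cover : ConvL0 μ d x = sigmaHull μ d (⋃ i, ConvL0 μ d (T i))
  faces : ∀ i j, ConvL0 μ d (T i) ∩ ConvL0 μ d (T j) = ∅ ∨
    ∃ J1 J2 : Finset (Fin n), J1.Nonempty ∧ J2.Nonempty ∧
      ConvL0 μ d (T i) ∩ ConvL0 μ d (T j) = ConvL0 μ d (fun k : J1 => T i k) ∧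
      ConvL0 μ d (T i) ∩ ConvL0 μ d (T j) = ConvL0 μ d (fun k : J2 => T j k)
  indepR : ∀ i, AffineIndependent ℝ (T i)
  cover' : convexHull ℝ (Set.range x) = ⋃ i, convexHull ℝ (Set.range (T i))
  faces' : ∀ i j, convexHull ℝ (Set.range (T i)) ∩ convexHull ℝ (Set.range (T j)) = ∅ ∨
    ∃ J1 J2 : Finset (Fin n), J1.Nonempty ∧ J2.Nonempty ∧
      convexHull ℝ (Set.range (T i)) ∩ convexHull ℝ (Set.range (T j))
        = convexHull ℝ (T i '' J1) ∧
      convexHull ℝ (Set.range (T i)) ∩ convexHull ℝ (Set.range (T j))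
        = convexHull ℝ (T j '' J2)

/-- The set of vertices `ext(𝒮')` of the counterpart subdivision. -/
def L0Subdivision.extVerts {n : ℕ} [NeZero n] {x : Fin n → L0 μ d}
    (S : L0Subdivision μ d x) : Set (L0 μ d) :=
  ⋃ i, Set.range (S.T i)

/-- `φ` is a proper L⁰-labeling function on the domain `D` (w.r.t. the base vertices `x`),
with labels in `{1,…,n}` (label `i+1` corresponding to the vertex `x i`). -/
def ProperL0Label {n : ℕ} [NeZero n] (x : Fin n → L0 μ d) (D : Set (L0 μ d))
    (φ : L0 μ d → (Ω →ₘ[μ] ℕ)) : Prop :=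
  ∀ y ∈ D, ∀ lam : Fin n → Ω → ℝ, (∀ i, Measurable (lam i)) →
    (∀ i ω, lam i ω ∈ Icc (0:ℝ) 1) → (∀ ω, ∑ i, lam i ω = 1) →
    (∀ᵐ ω ∂μ, y ω = ∑ i, lam i ω • x i ω) →
    ∀ i : Fin n, ∀ᵐ ω ∂μ, ¬(φ y ω = (i : ℕ) + 1 ∧ lam i ω = 0)

/-- `ψ` is a (classical) proper labeling function on the vertex set `V` of the counterpart
subdivision, with labels in `{1,…,n}`. -/
def ProperLabelR {n : ℕ} [NeZero n] (x : Fin n → L0 μ d) (V : Set (L0 μ d))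
    (ψ : L0 μ d → ℕ) : Prop :=
  ∀ y ∈ V, ∀ α : Fin n → ℝ, (∀ i, α i ∈ Icc (0:ℝ) 1) → (∑ i, α i = 1) →
    (y = ∑ i, α i • x i) → ∃ i : Fin n, ψ y = (i : ℕ) + 1 ∧ 0 < α i

/-- `h` is an L⁰-extreme point of `S`. -/
def IsL0ExtremePoint (S : Set (L0 μ d)) (h : L0 μ d) : Prop :=
  h ∈ S ∧ ∀ x ∈ S, ∀ y ∈ S, ∀ lam : Ω → ℝ, Measurable lam →
    (∀ᵐ ω ∂μ, lam ω ∈ Ioo (0:ℝ) 1) →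
    (∀ᵐ ω ∂μ, h ω = lam ω • x ω + (1 - lam ω) • y ω) → x = h ∧ y = h

section RandomIndex

variable {μ}

theorem ae_tendsto_of_forall_ae_eventually_dist_lt {α ι : Type*} [PseudoMetricSpace α]
    {l : Filter ι} {f : ι → Ω → α} {g : Ω → α}
    (h : ∀ ε > 0, ∀ᵐ ω ∂μ, ∀ᶠ k in l, dist (f k ω) (g ω) < ε) :
    ∀ᵐ ω ∂μ, Tendsto (f · ω) l (𝓝 (g ω)) := by
  filter_upwards [ae_all_iff.2 fun n : ℕ => h _ Nat.one_div_pos_of_nat] with ω hω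
  exact Metric.nhds_basis_ball_inv_nat_succ.tendsto_right_iff.2 fun n _ => hω n

variable {β : Type*} [TopologicalSpace β]

theorem exists_measurable_strictMono_forall_mem_of_frequently {E : ℕ → Set Ω}
    (hE : ∀ k, MeasurableSet (E k)) :
    ∃ n : ℕ → Ω → ℕ, (∀ k, Measurable (n k)) ∧ (∀ ω, StrictMono (n · ω)) ∧
      ∀ ω, (∃ᶠ m in atTop, ω ∈ E m) → ∀ k, ω ∈ E (n k ω) := by
  classical
  let P (ω : Ω) (m : ℕ) : Prop := (∃ᶠ m in atTop, ω ∈ E m) → ω ∈ E m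
  have hPm (m : ℕ) : MeasurableSet {ω | P ω m} := by
    have : {ω | P ω m} = (limsup E atTop)ᶜ ∪ E m := by
      ext ω
      simp only [P, mem_ofPred_eq, mem_union, mem_compl_iff, mem_limsup_iff_frequently_mem]
      tauto
    exact this ▸ (MeasurableSet.measurableSet_limsup hE).compl.union (hE m)
  have hP (ω : Ω) (N : ℕ) : ∃ m, N < m ∧ P ω m := by
    by_cases hω : ∃ᶠ m in atTop, ω ∈ E m
    · obtain ⟨m, hNm, hm⟩ := (frequently_atTop.1 hω) (N + 1)
      exact ⟨m, hNm, fun _ => hm⟩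
    · exact ⟨N + 1, N.lt_succ_self, fun h => absurd h hω⟩
  let next (f : Ω → ℕ) (ω : Ω) : ℕ := Nat.find (hP ω (f ω))
  have next_spec (f : Ω → ℕ) (ω : Ω) : f ω < next f ω ∧ P ω (next f ω) :=
    Nat.find_spec (hP ω (f ω))
  have next_measurable {f : Ω → ℕ} (hf : Measurable f) : Measurable (next f) :=
    measurable_find _ fun m => (hf measurableSet_Iio).inter (hPm m)
  let n (k : ℕ) : Ω → ℕ := next^[k + 1] fun _ => 0
  have n_succ (k : ℕ) : n (k + 1) = next (n k) := Function.iterate_succ_apply' _ _ _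
  refine ⟨n, fun k => ?_, fun ω => strictMono_nat_of_lt_succ fun k => ?_, fun ω hω k => ?_⟩
  · induction k with
    | zero => exact next_measurable measurable_const
    | succ k ih => exact n_succ k ▸ next_measurable ih
  · exact n_succ k ▸ (next_spec (n k) ω).1
  · cases k with
    | zero => exact (next_spec (fun _ => 0) ω).2 hω
    | succ k => exact n_succ k ▸ (next_spec (n k) ω).2 hω

theorem isPartition_preimage_singleton {N : Ω → ℕ} (hN : Measurable N) :
    IsPartition fun m => N ⁻¹' {m} :=
  ⟨fun m => hN (measurableSet_singleton m),
    fun _ _ h => disjoint_left.2 fun _ h₁ h₂ => h (h₁.symm.trans h₂),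
    eq_univ_of_forall fun ω => mem_iUnion.2 ⟨N ω, rfl⟩⟩

theorem IsPartition.exists_eq_preimage_singleton {A : ℕ → Set Ω} (hA : IsPartition A) :
    ∃ N : Ω → ℕ, Measurable N ∧ A = fun m => N ⁻¹' {m} := by
  obtain ⟨hAm, hAdisj, hAcover⟩ := hA
  choose N hN using fun ω => mem_iUnion.1 (hAcover ▸ mem_univ ω)
  have hA_eq : A = fun m => N ⁻¹' {m} := by
    funext m
    ext ω
    refine ⟨fun hω => ?_, fun h => (h : N ω = m) ▸ hN ω⟩
    by_contra hne
    exact disjoint_left.1 (hAdisj hne) (hN ω) hω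
  exact ⟨N, measurable_to_countable' fun m => congrFun hA_eq m ▸ hAm m, hA_eq⟩

theorem IsConcat.ae_eq_apply_index {v : ℕ → Ω →ₘ[μ] β} {z : Ω →ₘ[μ] β} {N : Ω → ℕ}
    (h : IsConcat μ (fun m => N ⁻¹' {m}) v z) : ∀ᵐ ω ∂μ, z ω = v (N ω) ω := by
  filter_upwards [ae_all_iff.2 h] with ω hω
  exact hω (N ω) rfl

variable [TopologicalSpace.PseudoMetrizableSpace β] [MeasurableSpace β] [BorelSpace β]

theorem measurable_apply_index {v : ℕ → Ω →ₘ[μ] β} {N : Ω → ℕ} (hN : Measurable N) :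
    Measurable fun ω => v (N ω) ω := by
  have : Measurable fun p : Ω × ℕ => v p.2 p.1 :=
    measurable_from_prod_countable_left fun n => (v n).stronglyMeasurable.measurable
  exact this.comp (measurable_id.prodMk hN)

variable [SecondCountableTopology β]

def evalAt (v : ℕ → Ω →ₘ[μ] β) {N : Ω → ℕ} (hN : Measurable N) : Ω →ₘ[μ] β :=
  AEEqFun.mk (fun ω => v (N ω) ω) (measurable_apply_index hN).aestronglyMeasurable

theorem coeFn_evalAt (v : ℕ → Ω →ₘ[μ] β) {N : Ω → ℕ} (hN : Measurable N) :
    evalAt v hN =ᵐ[μ] fun ω => v (N ω) ω :=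
  AEEqFun.coeFn_mk _ _

theorem isConcat_evalAt (v : ℕ → Ω →ₘ[μ] β) {N : Ω → ℕ} (hN : Measurable N) :
    IsConcat μ (fun m => N ⁻¹' {m}) v (evalAt v hN) := fun m => by
  filter_upwards [coeFn_evalAt v hN] with ω hω hm
  rw [hω, (hm : N ω = m)]

end RandomIndex

section SigmaStability

variable {μ d} {G : Set (L0 μ d)} {v : ℕ → L0 μ d} {N : Ω → ℕ}

theorem SigmaStable.evalAt_mem (hG : SigmaStable μ d G) (hv : ∀ n, v n ∈ G)
    (hN : Measurable N) : evalAt v hN ∈ G :=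
  hG _ (isPartition_preimage_singleton hN) v hv _ (isConcat_evalAt v hN)

theorem SigmaStableMapOn.ae_apply_evalAt {T : L0 μ d → L0 μ d} (hT : SigmaStableMapOn μ d G T)
    (hG : SigmaStable μ d G) (hv : ∀ n, v n ∈ G) (hN : Measurable N) :
    ∀ᵐ ω ∂μ, T (evalAt v hN) ω = T (v (N ω)) ω :=
  (hT _ (isPartition_preimage_singleton hN) v hv _ (hG.evalAt_mem hv hN)
    (isConcat_evalAt v hN)).ae_eq_apply_index

theorem L0Convex.evalAt_mem (hconv : L0Convex μ d G) (hv : ∀ n, v n ∈ G) (hN : Measurable N)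
    {K : ℕ} (hNK : ∀ ω, N ω ≤ K) : evalAt v hN ∈ G := by
  induction K generalizing N with
  | zero =>
    have hv0 : evalAt v hN = v 0 := by
      refine AEEqFun.ext ?_
      filter_upwards [coeFn_evalAt v hN] with ω hω
      rw [hω, Nat.le_zero.1 (hNK ω)]
    exact hv0 ▸ hv 0
  | succ K ih =>
    -- `v_N = 1_{N = K+1} v_{K+1} + (1 - 1_{N = K+1}) v_{min N K}`
    have hmin : Measurable fun ω => min (N ω) K := hN.min measurable_const
    let lam : Ω → ℝ := (N ⁻¹' {K + 1}).indicator 1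
    refine hconv _ (hv (K + 1)) _ (ih hmin fun ω => min_le_right _ _) lam
      (measurable_one.indicator (hN (measurableSet_singleton _)))
      (fun ω => ?_) _ ?_
    · by_cases h : N ω = K + 1 <;> simp [lam, h]
    filter_upwards [coeFn_evalAt v hN, coeFn_evalAt v hmin] with ω hω hω'
    rw [hω, hω']
    by_cases h : N ω = K + 1
    · simp [lam, h]
    · have : min (N ω) K = N ω := min_eq_left (by have := hNK ω; omega)
      simp [lam, h, this]

theorem TelClosed.sigmaStable [IsFiniteMeasure μ] (hcl : TelClosed μ d G)
    (hconv : L0Convex μ d G) : SigmaStable μ d G := by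
  intro A hA v hv z hz
  obtain ⟨N, hN, rfl⟩ := hA.exists_eq_preimage_singleton
  have hmin (K : ℕ) : Measurable fun ω => min (N ω) K := hN.min measurable_const
  refine hcl (fun K => evalAt v (hmin K)) (fun K => hconv.evalAt_mem hv (hmin K)
    fun ω => min_le_right _ _) z (tendstoInMeasure_of_tendsto_ae
      (fun K => (evalAt v (hmin K)).aestronglyMeasurable) ?_)
  filter_upwards [hz.ae_eq_apply_index, ae_all_iff.2 fun K => coeFn_evalAt v (hmin K)]
    with ω hzω hKω
  refine tendsto_const_nhds.congr' ?_
  filter_upwards [eventually_ge_atTop (N ω)] with K hK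
  rw [hKω, min_eq_left hK, hzω]

end SigmaStability

section Continuity

variable {μ d} [IsFiniteMeasure μ] {G : Set (L0 μ d)} {T : L0 μ d → L0 μ d}

theorem SigmaStableMapOn.ae_eventually_dist_lt (hT : SigmaStableMapOn μ d G T)
    (hG : SigmaStable μ d G) (hcont : ContInProbOn μ d G T) {x : L0 μ d} (hx : x ∈ G)
    {xs : ℕ → L0 μ d} (hxs : ∀ k, xs k ∈ G)
    (hlim : ∀ᵐ ω ∂μ, Tendsto (fun k => xs k ω) atTop (𝓝 (x ω))) {ε : ℝ} (hε : 0 < ε) :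
    ∀ᵐ ω ∂μ, ∀ᶠ k in atTop, dist (T (xs k) ω) (T x ω) < ε := by
  have hfar_meas (k : ℕ) : MeasurableSet {ω | ε ≤ dist (T (xs k) ω) (T x ω)} :=
    measurableSet_le measurable_const
      ((T (xs k)).stronglyMeasurable.measurable.dist (T x).stronglyMeasurable.measurable)
  obtain ⟨n, hn_meas, hn_mono, hn_far⟩ :=
    exists_measurable_strictMono_forall_mem_of_frequently hfar_meas
  let y (k : ℕ) : L0 μ d := evalAt xs (hn_meas k)
  have hyG (k : ℕ) : y k ∈ G := hG.evalAt_mem hxs (hn_meas k)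
  have hy : TendstoInMeasure μ (fun k => ⇑(y k)) atTop x := by
    refine tendstoInMeasure_of_tendsto_ae (fun k => (y k).aestronglyMeasurable) ?_
    filter_upwards [hlim, ae_all_iff.2 fun k => coeFn_evalAt xs (hn_meas k)] with ω hω hyω
    exact (hω.comp (hn_mono ω).tendsto_atTop).congr fun k => (hyω k).symm
  obtain ⟨ns, -, hTy⟩ := (hcont y hyG x hx hy).exists_seq_tendsto_ae
  filter_upwards [hTy, ae_all_iff.2 fun k => hT.ae_apply_evalAt hG hxs (hn_meas k)]
    with ω hTyω hTyω_eq
  suffices ¬∃ᶠ k in atTop, ε ≤ dist (T (xs k) ω) (T x ω) by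
    simpa only [not_frequently, not_le] using this
  intro hfreq
  obtain ⟨i, hi⟩ := Metric.tendsto_atTop.1 hTyω ε hε
  exact (hi i le_rfl).not_ge (hTyω_eq (ns i) ▸ hn_far ω hfreq (ns i))

end Continuity

theorem auto_as_sequentially_continuous_general {Ω : Type*} [MeasurableSpace Ω] (μ : Measure Ω)
    [IsProbabilityMeasure μ] (d : ℕ)
    (G : Set (L0 μ d)) (hcl : TelClosed μ d G) (hconv : L0Convex μ d G)
    (T : L0 μ d → L0 μ d) (hstab : SigmaStableMapOn μ d G T)
    (hcont : ContInProbOn μ d G T) :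
    ∀ x ∈ G, ∀ xs : ℕ → L0 μ d, (∀ k, xs k ∈ G) →
      (∀ᵐ ω ∂μ, Tendsto (fun k => xs k ω) atTop (nhds (x ω))) →
      ∀ᵐ ω ∂μ, Tendsto (fun k => T (xs k) ω) atTop (nhds (T x ω)) := fun _ hx _ hxs hlim =>
  ae_tendsto_of_forall_ae_eventually_dist_lt fun _ε hε =>
    hstab.ae_eventually_dist_lt (hcl.sigmaStable hconv) hcont hx hxs hlim hε

/-- Automatic a.s. sequential continuity of σ-stable
continuous-in-probability maps on `𝒯_{ε,λ}`-closed L⁰-convex sets. -/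
theorem auto_as_sequentially_continuous {Ω : Type*} [MeasurableSpace Ω] (μ : Measure Ω)
    [IsProbabilityMeasure μ] (d : ℕ) (hd : 0 < d)
    (G : Set (L0 μ d)) (hne : G.Nonempty) (hcl : TelClosed μ d G) (hconv : L0Convex μ d G)
    (T : L0 μ d → L0 μ d) (hstab : SigmaStableMapOn μ d G T)
    (hcont : ContInProbOn μ d G T) :
    ∀ x ∈ G, ∀ xs : ℕ → L0 μ d, (∀ k, xs k ∈ G) →
      (∀ᵐ ω ∂μ, Tendsto (fun k => xs k ω) atTop (nhds (x ω))) →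
      ∀ᵐ ω ∂μ, Tendsto (fun k => T (xs k) ω) atTop (nhds (T x ω)) :=
  auto_as_sequentially_continuous_general μ d G hcl hconv T hstab hcont

end RandomBrouwer
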